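/- arXiv:2308.03510 — 2 statements merged into one kernel-verified Lean document; each statement's English description precedes it below -/
import Mathlib

section
/- For every integer a and natural number t: ∑_{k=0}^{t} ψ(ak+1) = (aφ(t+1)(a²φ(t+1)−1))/6, where φ(n) = n(n-1)/2 and ψ(n) = n(n-1)(n-2)/6. -/
/-!
With `x = a k` the summand is `ψ(x + 1) = (x³ - x) / 6`, so by Nicomachus' identity
`∑ k³ = φ(t + 1)²` and `∑ k = φ(t + 1)` six times the sum is `a³ φ(t + 1)² - a φ(t + 1)`.
-/

/-- φ(n) = (n-1)n/2 -/
def phi (n : ℤ) : ℤ := n * (n - 1) / 2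

/-- ψ(n) = n(n-1)(n-2)/6 -/
def psi (n : ℤ) : ℤ := n * (n - 1) * (n - 2) / 6

lemma six_dvd_mul_sub_one_mul_sub_two (n : ℤ) : 6 ∣ n * (n - 1) * (n - 2) := by
  have hres : ∀ x : ZMod 6, x * (x - 1) * (x - 2) = 0 := by decide
  apply (ZMod.intCast_zmod_eq_zero_iff_dvd _ 6).mp
  push_cast
  exact hres n

lemma two_mul_phi (n : ℤ) : 2 * phi n = n * (n - 1) :=
  Int.mul_ediv_cancel' (Int.even_mul_pred_self n).two_dvd

lemma six_mul_psi (n : ℤ) : 6 * psi n = n * (n - 1) * (n - 2) :=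
  Int.mul_ediv_cancel' (six_dvd_mul_sub_one_mul_sub_two n)

lemma phi_add_one (n : ℤ) : phi (n + 1) = phi n + n := by
  have h := two_mul_phi n
  have h' := two_mul_phi (n + 1)
  linarith

lemma six_mul_sum_psi (a : ℤ) (t : ℕ) :
    6 * ∑ k ∈ Finset.range (t + 1), psi (a * k + 1) =
      a * phi (t + 1) * (a ^ 2 * phi (t + 1) - 1) := by
  induction t with
  | zero => simp [psi, phi]
  | succ t ih =>
    rw [Finset.sum_range_succ, mul_add, ih, six_mul_psi]
    push_cast
    rw [phi_add_one ((t : ℤ) + 1)]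
    linear_combination -a ^ 3 * ((t : ℤ) + 1) * two_mul_phi ((t : ℤ) + 1)

theorem sum_psi_succ (a : ℤ) (t : ℕ) :
    ∑ k ∈ Finset.range (t + 1), psi (a * (k : ℤ) + 1) =
      a * phi ((t : ℤ) + 1) * (a ^ 2 * phi ((t : ℤ) + 1) - 1) / 6 := by
  rw [← six_mul_sum_psi, Int.mul_ediv_cancel_left _ (by norm_num)]
end

section
/- Let T be a group, Y = T/Z(T), and Λ : Aut(T) → Aut(Y) the homomorphism induced by the canonical projection (well-defined since Z(T) is characteristic). For every i ≥ 0, Λ maps Aut_{i+2}(T) into Aut_{i+1}(Y), where Aut_j(G) denotes the kernel of the canonical map Aut(G) → Aut(G/Z_j(G)). -/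
/-- `autZ G j` is the kernel of the canonical map `Aut(G) → Aut(G/Z_j(G))`: the subgroup of
automorphisms `f` of `G` acting trivially on `G/Z_j(G)`, i.e. with `g⁻¹ * f g ∈ Z_j(G)` for
all `g`. -/
def autZ (G : Type*) [Group G] (j : ℕ) : Subgroup (MulAut G) where
  carrier := {f | ∀ g : G, g⁻¹ * f g ∈ upperCentralSeries G j}
  one_mem' := by
    intro g
    simpa using (upperCentralSeries G j).one_mem
  mul_mem' := by
    intro a b ha hb g
    have h : g⁻¹ * (a * b) g = (g⁻¹ * b g) * ((b g)⁻¹ * a (b g)) := by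
      simp [MulAut.mul_apply, mul_assoc]
    rw [h]
    exact mul_mem (hb g) (ha (b g))
  inv_mem' := by
    intro a ha g
    have h := (upperCentralSeries G j).inv_mem (ha (a⁻¹ g))
    simpa [mul_assoc] using h

/-- If `Λ : Aut(T) → Aut(T/Z(T))` is the homomorphism induced by the canonical projection,
then `Λ` maps `Aut_{i+2}(T)` into `Aut_{i+1}(T/Z(T))`. -/
theorem autZ_map_quotient_center (T : Type*) [Group T]
    (Λ : MulAut T →* MulAut (T ⧸ Subgroup.center T))
    (hΛ : ∀ (f : MulAut T) (t : T),
      (Λ f) (QuotientGroup.mk' (Subgroup.center T) t) =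
        QuotientGroup.mk' (Subgroup.center T) (f t))
    (i : ℕ) (f : MulAut T) (hf : f ∈ autZ T (i + 2)) :
    Λ f ∈ autZ (T ⧸ Subgroup.center T) (i + 1) := by
  intro g
  obtain ⟨t, rfl⟩ := QuotientGroup.mk'_surjective (Subgroup.center T) g
  rw [hΛ]
  have h : t⁻¹ * f t ∈ upperCentralSeries T (i + 2) := hf t
  rw [show upperCentralSeries T (i + 2) = Subgroup.upperCentralSeries T (i + 1).succ from rfl,
    ← Subgroup.comap_upperCentralSeries_quotient_center (i + 1)] at h
  simp at h
  exact h
end
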